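/- Under the conditions |εᵢ*| ≤ λᵢ for all i, if μ̂ minimizes ‖(μ⁰ + ε*) - μ‖² + 2∑ᵢλᵢ|μᵢ| then for any μ: ‖μ̂ - μ⁰‖² ≤ ‖μ - μ⁰‖² + 4∑_{i∈S(μ)} λᵢ|μ̂ᵢ - μᵢ|. -/

import Mathlib

/-!
Expanding the squares around `μ⁰`, the optimality of `μ̂` against a competitor `μ` is the basic
inequality `‖μ̂ - μ⁰‖² ≤ ‖μ - μ⁰‖² + 2 ∑ λᵢ (|μᵢ| - |μ̂ᵢ|) + 2 ⟨ε*, μ̂ - μ⟩`. Coordinatewise,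
`|εᵢ*| ≤ λᵢ` bounds `εᵢ* (μ̂ᵢ - μᵢ)` by `λᵢ |μ̂ᵢ - μᵢ|`: off `S(μ)` this is absorbed by the penalty
term `-λᵢ |μ̂ᵢ|`, and on `S(μ)` the penalty term is at most `λᵢ |μ̂ᵢ - μᵢ|` as well.
-/

open Finset

theorem penalized_least_squares_basic_inequality {ι : Type*} [Fintype ι]
    (mu0 eps lam muhat : ι → ℝ)
    (hmin : ∀ μ : ι → ℝ,
      ∑ i, ((mu0 i + eps i) - muhat i) ^ 2 + 2 * ∑ i, lam i * |muhat i| ≤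
        ∑ i, ((mu0 i + eps i) - μ i) ^ 2 + 2 * ∑ i, lam i * |μ i|)
    (μ : ι → ℝ) :
    ∑ i, (muhat i - mu0 i) ^ 2 ≤
      ∑ i, (μ i - mu0 i) ^ 2 + 2 * ∑ i, lam i * (|μ i| - |muhat i|) +
        2 * ∑ i, eps i * (muhat i - μ i) := by
  have hexpand : ∑ i, ((mu0 i + eps i) - μ i) ^ 2 =
      ∑ i, ((mu0 i + eps i) - muhat i) ^ 2 + ∑ i, (μ i - mu0 i) ^ 2 -
        ∑ i, (muhat i - mu0 i) ^ 2 + 2 * ∑ i, eps i * (muhat i - μ i) := by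
    rw [mul_sum, ← sum_add_distrib, ← sum_sub_distrib, ← sum_add_distrib]
    exact sum_congr rfl fun i _ => by ring
  have hpenalty : ∑ i, lam i * (|μ i| - |muhat i|) =
      ∑ i, lam i * |μ i| - ∑ i, lam i * |muhat i| := by
    rw [← sum_sub_distrib]
    exact sum_congr rfl fun i _ => mul_sub _ _ _
  linarith [hmin μ]

theorem mul_sub_add_mul_abs_sub_abs_le {e l a m : ℝ} (he : |e| ≤ l) :
    e * (a - m) + l * (|m| - |a|) ≤ 2 * if m ≠ 0 then l * |a - m| else 0 := by
  have hnoise : e * (a - m) ≤ l * |a - m| :=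
    (le_abs_self _).trans <| (abs_mul e _).trans_le <|
      mul_le_mul_of_nonneg_right he (abs_nonneg _)
  split_ifs with hm
  · have hl : 0 ≤ l := (abs_nonneg e).trans he
    have htri : |m| - |a| ≤ |a - m| := by
      simpa only [abs_sub_comm m a] using abs_sub_abs_le_abs_sub m a
    linarith [mul_le_mul_of_nonneg_left htri hl]
  · obtain rfl : m = 0 := not_not.mp hm
    simp only [sub_zero, abs_zero, zero_sub, mul_neg] at hnoise ⊢
    linarith

theorem lasso_oracle_basic_bound_general (n : ℕ) (mu0 eps lam muhat : Fin n → ℝ)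
    (heps : ∀ i, |eps i| ≤ lam i)
    (hmin : ∀ μ : Fin n → ℝ,
      ∑ i, ((mu0 i + eps i) - muhat i) ^ 2 + 2 * ∑ i, lam i * |muhat i| ≤
        ∑ i, ((mu0 i + eps i) - μ i) ^ 2 + 2 * ∑ i, lam i * |μ i|) :
    ∀ μ : Fin n → ℝ,
      ∑ i, (muhat i - mu0 i) ^ 2 ≤
        ∑ i, (μ i - mu0 i) ^ 2 +
          4 * ∑ i ∈ Finset.univ.filter (fun i => μ i ≠ 0),
            lam i * |muhat i - μ i| := by
  intro μ
  have hcoord : ∑ i, eps i * (muhat i - μ i) + ∑ i, lam i * (|μ i| - |muhat i|) ≤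
      2 * ∑ i ∈ univ.filter (fun i => μ i ≠ 0), lam i * |muhat i - μ i| := by
    rw [sum_filter, mul_sum, ← sum_add_distrib]
    exact sum_le_sum fun i _ => mul_sub_add_mul_abs_sub_abs_le (heps i)
  linarith [penalized_least_squares_basic_inequality mu0 eps lam muhat hmin μ]

/-- If `|εᵢ*| ≤ λᵢ` for all `i` and `μ̂` minimizes
`μ ↦ ‖(μ⁰ + ε*) - μ‖² + 2 ∑ᵢ λᵢ |μᵢ|`, then for any `μ`:
`‖μ̂ - μ⁰‖² ≤ ‖μ - μ⁰‖² + 4 ∑_{i ∈ S(μ)} λᵢ |μ̂ᵢ - μᵢ|`. -/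
theorem lasso_oracle_basic_bound (n : ℕ) (mu0 eps lam muhat : Fin n → ℝ)
    (hlam : ∀ i, 0 < lam i)
    (heps : ∀ i, |eps i| ≤ lam i)
    (hmin : ∀ μ : Fin n → ℝ,
      ∑ i, ((mu0 i + eps i) - muhat i) ^ 2 + 2 * ∑ i, lam i * |muhat i| ≤
        ∑ i, ((mu0 i + eps i) - μ i) ^ 2 + 2 * ∑ i, lam i * |μ i|) :
    ∀ μ : Fin n → ℝ,
      ∑ i, (muhat i - mu0 i) ^ 2 ≤
        ∑ i, (μ i - mu0 i) ^ 2 +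
          4 * ∑ i ∈ Finset.univ.filter (fun i => μ i ≠ 0),
            lam i * |muhat i - μ i| :=
  lasso_oracle_basic_bound_general n mu0 eps lam muhat heps hmin
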